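/- arXiv:2605.11917 — 5 statements merged into one kernel-verified Lean document; each statement's English description precedes it below -/
import Mathlib

section
/- The function β(u) := log(cosh u)/(4u²) for u ≠ 0, with β(0) := 1/8, is strictly decreasing on (0, ∞). -/
noncomputable def beta (u : ℝ) : ℝ :=
  if u = 0 then 1 / 8 else Real.log (Real.cosh u) / (4 * u ^ 2)

lemma hasDerivAt_logcosh (u : ℝ) :
    HasDerivAt (fun x => Real.log (Real.cosh x)) (Real.tanh u) u := by
  have h := (Real.hasDerivAt_cosh u).log (Real.cosh_pos u).ne'
  simpa [Real.tanh_eq_sinh_div_cosh] using h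

lemma hasDerivAt_tanh' (u : ℝ) :
    HasDerivAt Real.tanh (1 / Real.cosh u ^ 2) u := by
  have h := (Real.hasDerivAt_sinh u).div (Real.hasDerivAt_cosh u) (Real.cosh_pos u).ne'
  have hfun : Real.tanh = fun x => Real.sinh x / Real.cosh x := by
    funext x; exact Real.tanh_eq_sinh_div_cosh x
  rw [hfun]
  refine h.congr_deriv ?_
  have h1 := Real.cosh_sq_sub_sinh_sq u
  field_simp
  nlinarith [h1]

lemma gderiv (u : ℝ) :
    HasDerivAt (fun x => 2 * Real.log (Real.cosh x) - x * Real.tanh x)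
      (Real.tanh u - u / Real.cosh u ^ 2) u := by
  have h := ((hasDerivAt_logcosh u).const_mul 2).sub
    ((hasDerivAt_id u).mul (hasDerivAt_tanh' u))
  refine h.congr_deriv ?_
  simp only [id_eq]
  ring

lemma key : ∀ u : ℝ, 0 < u → u * Real.tanh u < 2 * Real.log (Real.cosh u) := by
  have hmono : StrictMonoOn (fun x => 2 * Real.log (Real.cosh x) - x * Real.tanh x)
      (Set.Ici (0 : ℝ)) := by
    apply StrictMonoOn.mono (s := Set.Ici (0 : ℝ)) ?_ le_rfl
    apply strictMonoOn_of_deriv_pos (convex_Ici 0)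
    · exact fun x _ => (gderiv x).differentiableAt.continuousAt.continuousWithinAt
    · intro x hx
      rw [interior_Ici, Set.mem_Ioi] at hx
      rw [(gderiv x).deriv]
      have hc := Real.cosh_pos x
      have hs : x < Real.sinh x * Real.cosh x := by
        have h1 := Real.self_lt_sinh_iff.mpr (by linarith : (0:ℝ) < 2 * x)
        have h2 := Real.sinh_two_mul x
        nlinarith
      rw [Real.tanh_eq_sinh_div_cosh, sub_pos, div_lt_div_iff₀ (by positivity) hc]
      nlinarith
  intro u hu
  have h := hmono (Set.self_mem_Ici) (Set.mem_Ici.mpr hu.le) hu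
  simpa using h

lemma betaAuxDeriv (x : ℝ) (hx : 0 < x) :
    HasDerivAt (fun u => Real.log (Real.cosh u) / (4 * u ^ 2))
      ((Real.tanh x * (4 * x ^ 2) - Real.log (Real.cosh x) * (4 * (2 * x ^ 1)))
        / (4 * x ^ 2) ^ 2) x := by
  exact (hasDerivAt_logcosh x).div ((hasDerivAt_pow 2 x).const_mul 4)
    (by positivity)

theorem beta_strictAntiOn : StrictAntiOn beta (Set.Ioi (0 : ℝ)) := by
  have hf : StrictAntiOn (fun u => Real.log (Real.cosh u) / (4 * u ^ 2)) (Set.Ioi 0) := by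
    apply strictAntiOn_of_deriv_neg (convex_Ioi 0)
    · intro x hx
      exact (betaAuxDeriv x hx).differentiableAt.continuousAt.continuousWithinAt
    · intro x hx
      rw [interior_Ioi] at hx
      rw [(betaAuxDeriv x hx).deriv]
      apply div_neg_of_neg_of_pos
      · have := key x hx
        nlinarith [mul_pos hx (sub_pos.mpr (key x hx))]
      · have hx0 : x ≠ 0 := hx.ne'
        positivity
  intro a ha b hb hab
  have h := hf ha hb hab
  have ha0 : a ≠ 0 := (Set.mem_Ioi.mp ha).ne'
  have hb0 : b ≠ 0 := (Set.mem_Ioi.mp hb).ne'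
  simpa [beta, ha0, hb0] using h
end

section
/- For every real x with |x| ≤ ε < 1, |log²(1+x) - (x² - x³)| ≤ ε⁴ · (11 + 6|log(1-ε)|)/(12(1-ε)⁴). -/
set_option maxHeartbeats 800000

theorem airm_taylor_bound (x ε : ℝ) (hx : |x| ≤ ε) (hε : ε < 1) :
    |Real.log (1 + x) ^ 2 - (x ^ 2 - x ^ 3)| ≤
      ε ^ 4 * (11 + 6 * |Real.log (1 - ε)|) / (12 * (1 - ε) ^ 4) := by
  have hε0 : 0 ≤ ε := le_trans (abs_nonneg x) hx
  set c : ℝ := 1 - ε with hcdef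
  have hc0 : 0 < c := by simp only [hcdef]; linarith
  have hc1 : c ≤ 1 := by simp only [hcdef]; linarith
  have hxlo : -ε ≤ x := neg_le_of_abs_le hx
  have hxhi : x ≤ ε := le_of_abs_le hx
  have hmem : ∀ t ∈ Set.uIcc (0:ℝ) x, c ≤ 1 + t := by
    intro t ht
    rcases Set.mem_uIcc.mp ht with ⟨h1, h2⟩ | ⟨h1, h2⟩ <;> simp only [hcdef] <;> nlinarith
  have hne : ∀ t ∈ Set.uIcc (0:ℝ) x, (1 + t) ≠ 0 := fun t ht =>
    ne_of_gt (lt_of_lt_of_le hc0 (hmem t ht))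
  -- Integrability
  have hint : IntervalIntegrable (fun t => t^2/(1+t)) MeasureTheory.volume 0 x := by
    apply ContinuousOn.intervalIntegrable
    exact ContinuousOn.div (by fun_prop) (by fun_prop) hne
  have hint2 : IntervalIntegrable (fun t => t^2/c) MeasureTheory.volume 0 x := by
    apply ContinuousOn.intervalIntegrable; fun_prop
  -- FTC
  have hderiv : ∀ t ∈ Set.uIcc (0:ℝ) x,
      HasDerivAt (fun u => Real.log (1+u) - u + u^2/2) (t^2/(1+t)) t := by
    intro t ht
    have h1t : 0 < 1 + t := lt_of_lt_of_le hc0 (hmem t ht)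
    have hlog : HasDerivAt (fun u : ℝ => Real.log (1+u)) (1/(1+t)) t := by
      have h2 : HasDerivAt (fun u : ℝ => 1 + u) 1 t := (hasDerivAt_id t).const_add 1
      simpa [one_div, Function.comp_def] using (Real.hasDerivAt_log h1t.ne').comp t h2
    have h3 : HasDerivAt (fun u : ℝ => u^2/2) t t := by
      simpa using (hasDerivAt_pow 2 t).div_const 2
    have h4 : HasDerivAt (fun u : ℝ => Real.log (1+u) - u + u^2/2) (1/(1+t) - 1 + t) t :=
      (hlog.sub (hasDerivAt_id t)).add h3
    have heq : 1/(1+t) - 1 + t = t^2/(1+t) := by field_simp; ring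
    rwa [heq] at h4
  set s : ℝ := Real.log (1+x) - x + x^2/2 with hsdef
  have hFTC : (∫ t in (0:ℝ)..x, t^2/(1+t)) = s := by
    have := intervalIntegral.integral_eq_sub_of_hasDerivAt hderiv hint
    simpa using this
  -- bound on s
  have hsbound : |s| ≤ ε^3/(3*c) := by
    rw [← hFTC]
    rcases le_or_gt 0 x with hx0 | hx0
    · have hnn : 0 ≤ ∫ t in (0:ℝ)..x, t^2/(1+t) := by
        apply intervalIntegral.integral_nonneg hx0
        intro t ht
        have h1t : 0 < 1 + t := lt_of_lt_of_le hc0 (hmem t (by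
          rw [Set.uIcc_of_le hx0]; exact ht))
        positivity
      have hmono : (∫ t in (0:ℝ)..x, t^2/(1+t)) ≤ ∫ t in (0:ℝ)..x, t^2/c := by
        apply intervalIntegral.integral_mono_on hx0 hint hint2
        intro t ht
        have hct : c ≤ 1 + t := hmem t (by rw [Set.uIcc_of_le hx0]; exact ht)
        exact div_le_div_of_nonneg_left (sq_nonneg t) hc0 hct
      have hval : (∫ t in (0:ℝ)..x, t^2/c) = x^3/(3*c) := by
        rw [intervalIntegral.integral_div, integral_pow]
        norm_num [div_div]
      rw [abs_of_nonneg hnn]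
      calc (∫ t in (0:ℝ)..x, t^2/(1+t)) ≤ x^3/(3*c) := by rw [← hval]; exact hmono
        _ ≤ ε^3/(3*c) := by
            apply div_le_div_of_nonneg_right _ (by positivity)
            nlinarith [mul_nonneg (sub_nonneg.2 hxhi)
              (show (0:ℝ) ≤ ε^2 + ε*x + x^2 by nlinarith [sq_nonneg (ε+x), sq_nonneg (ε-x)])]
    · have hsymm : (∫ t in (0:ℝ)..x, t^2/(1+t)) = -∫ t in x..(0:ℝ), t^2/(1+t) :=
        (intervalIntegral.integral_symm x 0)
      have huIcc : Set.uIcc (0:ℝ) x = Set.Icc x 0 := by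
        rw [Set.uIcc_of_ge hx0.le]
      have hint' : IntervalIntegrable (fun t => t^2/(1+t)) MeasureTheory.volume x 0 :=
        hint.symm
      have hint2' : IntervalIntegrable (fun t => t^2/c) MeasureTheory.volume x 0 :=
        hint2.symm
      have hnn : 0 ≤ ∫ t in x..(0:ℝ), t^2/(1+t) := by
        apply intervalIntegral.integral_nonneg hx0.le
        intro t ht
        have h1t : 0 < 1 + t := lt_of_lt_of_le hc0 (hmem t (by rw [huIcc]; exact ht))
        positivity
      have hmono : (∫ t in x..(0:ℝ), t^2/(1+t)) ≤ ∫ t in x..(0:ℝ), t^2/c := by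
        apply intervalIntegral.integral_mono_on hx0.le hint' hint2'
        intro t ht
        have hct : c ≤ 1 + t := hmem t (by rw [huIcc]; exact ht)
        exact div_le_div_of_nonneg_left (sq_nonneg t) hc0 hct
      have hval : (∫ t in x..(0:ℝ), t^2/c) = -x^3/(3*c) := by
        rw [intervalIntegral.integral_div, integral_pow]
        norm_num [div_div]
      rw [hsymm, abs_neg, abs_of_nonneg hnn]
      calc (∫ t in x..(0:ℝ), t^2/(1+t)) ≤ -x^3/(3*c) := by rw [← hval]; exact hmono
        _ ≤ ε^3/(3*c) := by
            apply div_le_div_of_nonneg_right _ (by positivity)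
            nlinarith [pow_le_pow_left₀ (show (0:ℝ) ≤ -x by linarith)
              (show -x ≤ ε by linarith) 3]
  -- algebraic identity
  have key : Real.log (1+x)^2 - (x^2 - x^3) = x^4/4 + 2*s*x - s*x^2 + s^2 := by
    have hL : Real.log (1+x) = x - x^2/2 + s := by rw [hsdef]; ring
    rw [hL]; ring
  rw [key]
  have hB : (0:ℝ) ≤ ε^3/(3*c) := by positivity
  have h1 : |x^4/4| ≤ ε^4/4 := by
    calc |x^4/4| = |x|^4/4 := by rw [abs_div, abs_pow]; norm_num
      _ ≤ ε^4/4 := by gcongr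
  have h2 : |2*s*x| ≤ 2*(ε^3/(3*c))*ε := by
    rw [abs_mul, abs_mul, abs_two]
    have := mul_le_mul hsbound hx (abs_nonneg x) hB
    nlinarith [abs_nonneg s]
  have h3 : |s*x^2| ≤ (ε^3/(3*c))*ε^2 := by
    rw [abs_mul, abs_pow]
    exact mul_le_mul hsbound (pow_le_pow_left₀ (abs_nonneg x) hx 2) (by positivity) hB
  have h4 : |s^2| ≤ (ε^3/(3*c))^2 := by
    rw [abs_pow]
    exact pow_le_pow_left₀ (abs_nonneg s) hsbound 2
  have habs : |x^4/4 + 2*s*x - s*x^2 + s^2| ≤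
      ε^4/4 + 2*(ε^3/(3*c))*ε + (ε^3/(3*c))*ε^2 + (ε^3/(3*c))^2 := by
    calc |x^4/4 + 2*s*x - s*x^2 + s^2|
        ≤ |x^4/4 + 2*s*x - s*x^2| + |s^2| := abs_add_le _ _
      _ ≤ |x^4/4 + 2*s*x| + |s*x^2| + |s^2| := by
          have := abs_sub (x^4/4 + 2*s*x) (s*x^2)
          linarith
      _ ≤ |x^4/4| + |2*s*x| + |s*x^2| + |s^2| := by
          have := abs_add_le (x^4/4) (2*s*x)
          linarith
      _ ≤ ε^4/4 + 2*(ε^3/(3*c))*ε + (ε^3/(3*c))*ε^2 + (ε^3/(3*c))^2 := by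
          linarith
  refine le_trans habs ?_
  have hsc : 3*c^4 + 8*c^3 + 4*ε*c^3 + (4/3)*ε^2*c^2 ≤ 11 := by
    simp only [hcdef]
    nlinarith [mul_nonneg hε0 (sub_nonneg.2 hε.le),
      mul_nonneg (mul_nonneg (mul_nonneg hε0 hε0) hε0) (sub_nonneg.2 hε.le),
      mul_nonneg (mul_nonneg hε0 hε0) hε0, hε0]
  have hmain : ε^4/4 + 2*(ε^3/(3*c))*ε + (ε^3/(3*c))*ε^2 + (ε^3/(3*c))^2
      ≤ ε^4 * 11 / (12 * c^4) := by
    rw [le_div_iff₀ (by positivity)]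
    have hexp : (ε^4/4 + 2*(ε^3/(3*c))*ε + (ε^3/(3*c))*ε^2 + (ε^3/(3*c))^2) * (12*c^4)
        = ε^4 * (3*c^4 + 8*c^3 + 4*ε*c^3 + (4/3)*ε^2*c^2) := by
      field_simp
      ring
    rw [hexp]
    exact mul_le_mul_of_nonneg_left hsc (by positivity)
  refine le_trans hmain ?_
  gcongr
  linarith [abs_nonneg (Real.log c)]
end

section
/- For every real x with |x| ≤ ε < 1, |8·log(1 + x/2) - 4·log(1+x) - (x² - x³)| ≤ ε⁴·(1/(1-ε)⁴ + 1/(2-ε)⁴). -/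
set_option maxHeartbeats 1000000 in
theorem jbld_taylor_bound (x ε : ℝ) (hx : |x| ≤ ε) (hε : ε < 1) :
    |8 * Real.log (1 + x / 2) - 4 * Real.log (1 + x) - (x ^ 2 - x ^ 3)| ≤
      ε ^ 4 * (1 / (1 - ε) ^ 4 + 1 / (2 - ε) ^ 4) := by
  have habs := abs_le.mp hx
  have hε0 : 0 ≤ ε := (abs_nonneg x).trans hx
  have hx1 : -ε ≤ x := habs.1
  have hx2 : x ≤ ε := habs.2
  have h1ε : 0 < 1 - ε := by linarith
  have h2ε : 0 < 2 - ε := by linarith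
  set h : ℝ → ℝ := fun t => t ^ 3 * (7 + 3 * t) / ((1 + t) * (2 + t)) with hh
  have hderiv : ∀ t ∈ Set.uIcc (0:ℝ) x, HasDerivAt
      (fun t => 8 * Real.log (1 + t / 2) - 4 * Real.log (1 + t) - (t ^ 2 - t ^ 3)) (h t) t := by
    intro t ht
    have htm : t ∈ Set.Icc (-ε) ε := by
      rcases Set.mem_uIcc.mp ht with h' | h' <;> constructor <;> nlinarith [h'.1, h'.2]
    have ht1 : 0 < 1 + t := by nlinarith [htm.1]
    have ht2 : 0 < 2 + t := by nlinarith [htm.1]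
    have ht2' : (1 : ℝ) + t / 2 ≠ 0 := by intro hc; nlinarith [htm.1]
    have d1 : HasDerivAt (fun t : ℝ => 1 + t / 2) (1 / 2) t := by
      simpa using ((hasDerivAt_id t).div_const 2).const_add 1
    have d2 : HasDerivAt (fun t : ℝ => 1 + t) 1 t := by
      simpa using (hasDerivAt_id t).const_add 1
    have dl1 : HasDerivAt (fun t : ℝ => 8 * Real.log (1 + t / 2)) (8 * ((1/2) / (1 + t/2))) t :=
      (d1.log ht2').const_mul 8
    have dl2 : HasDerivAt (fun t : ℝ => 4 * Real.log (1 + t)) (4 * (1 / (1 + t))) t :=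
      (d2.log ht1.ne').const_mul 4
    have dp : HasDerivAt (fun t : ℝ => t ^ 2 - t ^ 3) (2 * t - 3 * t ^ 2) t := by
      have := ((hasDerivAt_pow 2 t).fun_sub (hasDerivAt_pow 3 t))
      simpa using this
    have := (dl1.fun_sub dl2).fun_sub dp
    refine this.congr_deriv ?_
    rw [hh]
    field_simp
    ring
  have hcont : ContinuousOn h (Set.uIcc (0:ℝ) x) := by
    apply ContinuousOn.div
    · fun_prop
    · fun_prop
    · intro t ht
      have htm : t ∈ Set.Icc (-ε) ε := by
        rcases Set.mem_uIcc.mp ht with h' | h' <;> constructor <;> nlinarith [h'.1, h'.2]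
      have ht1 : 0 < 1 + t := by nlinarith [htm.1]
      have ht2 : 0 < 2 + t := by nlinarith [htm.1]
      positivity
  have hint : IntervalIntegrable h MeasureTheory.volume 0 x := hcont.intervalIntegrable
  have hFTC := intervalIntegral.integral_eq_sub_of_hasDerivAt hderiv hint
  have hkey : 8 * Real.log (1 + x / 2) - 4 * Real.log (1 + x) - (x ^ 2 - x ^ 3)
      = ∫ t in (0:ℝ)..x, h t := by rw [hFTC]; norm_num
  rw [hkey]
  have hx4 : x ^ 4 ≤ ε ^ 4 := by
    have hsq : x ^ 2 ≤ ε ^ 2 := by nlinarith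
    nlinarith [mul_nonneg (sub_nonneg.mpr hsq) (by positivity : (0:ℝ) ≤ x ^ 2 + ε ^ 2)]
  rcases le_or_gt 0 x with hx0 | hx0
  · -- x ≥ 0
    have hnn : 0 ≤ ∫ t in (0:ℝ)..x, h t := by
      apply intervalIntegral.integral_nonneg hx0
      intro t ht
      have ht1 : (0:ℝ) < 1 + t := by linarith [ht.1]
      have ht2 : (0:ℝ) < 2 + t := by linarith [ht.1]
      have hnum : 0 ≤ t ^ 3 * (7 + 3 * t) :=
        mul_nonneg (pow_nonneg ht.1 3) (by linarith [ht.1])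
      exact div_nonneg hnum (by positivity)
    rw [abs_of_nonneg hnn]
    have hmono : (∫ t in (0:ℝ)..x, h t) ≤ ∫ t in (0:ℝ)..x, (7 + 3 * ε) / 2 * t ^ 3 := by
      apply intervalIntegral.integral_mono_on hx0 hint
      · apply Continuous.intervalIntegrable; fun_prop
      · intro t ht
        have ht0 : 0 ≤ t := ht.1
        have htε : t ≤ ε := ht.2.trans hx2
        have ht1 : (0:ℝ) < 1 + t := by linarith
        have ht2 : (0:ℝ) < 2 + t := by linarith
        have h3 : (0:ℝ) ≤ t ^ 3 := pow_nonneg ht0 3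
        have hd : (2:ℝ) ≤ (1 + t) * (2 + t) := by nlinarith
        have hc : (0:ℝ) ≤ (7 + 3 * ε) / 2 * t ^ 3 := by positivity
        rw [hh, div_le_iff₀ (by positivity)]
        nlinarith [mul_nonneg h3 (by linarith : (0:ℝ) ≤ ε - t),
          mul_le_mul_of_nonneg_left hd hc]
    have hval : (∫ t in (0:ℝ)..x, (7 + 3 * ε) / 2 * t ^ 3) = (7 + 3 * ε) / 2 * (x ^ 4 / 4) := by
      rw [intervalIntegral.integral_const_mul, integral_pow]
      norm_num
    rw [hval] at hmono
    have h41 : (1 - ε) ^ 4 ≤ 1 - ε := by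
      simpa using pow_le_pow_of_le_one h1ε.le (by linarith) (show 1 ≤ 4 by norm_num)
    have hA : (13 + 6 * ε) / 16 ≤ 1 / (1 - ε) ^ 4 := by
      rw [div_le_div_iff₀ (by norm_num) (pow_pos h1ε 4)]
      nlinarith [mul_le_mul_of_nonneg_left h41 hε0]
    have hB : (1:ℝ) / 16 ≤ 1 / (2 - ε) ^ 4 := by
      have : (2 - ε) ^ 4 ≤ 2 ^ 4 := pow_le_pow_left₀ h2ε.le (by linarith) 4
      calc (1:ℝ)/16 = 1 / 2 ^ 4 := by norm_num
        _ ≤ 1 / (2 - ε) ^ 4 := by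
          apply one_div_le_one_div_of_le (pow_pos h2ε 4) this
    calc (∫ t in (0:ℝ)..x, h t) ≤ (7 + 3 * ε) / 2 * (x ^ 4 / 4) := hmono
      _ ≤ (7 + 3 * ε) / 2 * (ε ^ 4 / 4) := by gcongr
      _ = ε ^ 4 * ((13 + 6 * ε) / 16 + 1 / 16) := by ring
      _ ≤ ε ^ 4 * (1 / (1 - ε) ^ 4 + 1 / (2 - ε) ^ 4) := by
          apply mul_le_mul_of_nonneg_left (add_le_add hA hB) (by positivity)
  · -- x < 0
    have hx0' : x ≤ 0 := hx0.le
    have hsymm : (∫ t in (0:ℝ)..x, h t) = ∫ t in x..(0:ℝ), -h t := by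
      rw [intervalIntegral.integral_neg, ← intervalIntegral.integral_symm]
    have hptwise : ∀ t ∈ Set.Icc x (0:ℝ), -h t ≤ 7 / ((1 - ε) * (2 - ε)) * (-t ^ 3) := by
      intro t ht
      have htx : x ≤ t := ht.1
      have ht0 : t ≤ 0 := ht.2
      have htε : -ε ≤ t := le_trans hx1 htx
      have ht1 : (0:ℝ) < 1 + t := by linarith
      have ht2 : (0:ℝ) < 2 + t := by linarith
      have h3 : (0:ℝ) ≤ -t ^ 3 := by nlinarith [sq_nonneg t]
      have hrw : -h t = (-t ^ 3) * ((7 + 3 * t) / ((1 + t) * (2 + t))) := by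
        rw [hh]; ring
      have hq : (7 + 3 * t) / ((1 + t) * (2 + t)) ≤ 7 / ((1 - ε) * (2 - ε)) := by
        apply div_le_div₀ (by norm_num) (by linarith) (by positivity)
        nlinarith
      calc -h t = (-t ^ 3) * ((7 + 3 * t) / ((1 + t) * (2 + t))) := hrw
        _ ≤ (-t ^ 3) * (7 / ((1 - ε) * (2 - ε))) := mul_le_mul_of_nonneg_left hq h3
        _ = 7 / ((1 - ε) * (2 - ε)) * (-t ^ 3) := by ring
    have hnn : 0 ≤ ∫ t in (0:ℝ)..x, h t := by
      rw [hsymm]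
      apply intervalIntegral.integral_nonneg hx0'
      intro t ht
      have htx : x ≤ t := ht.1
      have ht0 : t ≤ 0 := ht.2
      have htε : -ε ≤ t := le_trans hx1 htx
      have ht1 : (0:ℝ) < 1 + t := by linarith
      have ht2 : (0:ℝ) < 2 + t := by linarith
      have h3 : t ^ 3 ≤ 0 := by nlinarith [sq_nonneg t]
      have hnum : t ^ 3 * (7 + 3 * t) ≤ 0 :=
        mul_nonpos_of_nonpos_of_nonneg h3 (by linarith)
      simp only [hh, neg_nonneg]
      exact div_nonpos_of_nonpos_of_nonneg hnum (by positivity)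
    rw [abs_of_nonneg hnn, hsymm]
    have hintneg : IntervalIntegrable (fun t => -h t) MeasureTheory.volume x 0 := hint.symm.neg
    have hmono : (∫ t in x..(0:ℝ), -h t) ≤ ∫ t in x..(0:ℝ), 7 / ((1 - ε) * (2 - ε)) * (-t ^ 3) := by
      apply intervalIntegral.integral_mono_on hx0' hintneg
      · apply Continuous.intervalIntegrable; fun_prop
      · exact hptwise
    have hval : (∫ t in x..(0:ℝ), 7 / ((1 - ε) * (2 - ε)) * (-t ^ 3))
        = 7 / ((1 - ε) * (2 - ε)) * (x ^ 4 / 4) := by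
      simp only [mul_neg]
      rw [intervalIntegral.integral_neg, intervalIntegral.integral_const_mul, integral_pow]
      norm_num
      ring
    rw [hval] at hmono
    have h31 : (1 - ε) ^ 3 ≤ 1 - ε := by
      simpa using pow_le_pow_of_le_one h1ε.le (by linarith) (show 1 ≤ 3 by norm_num)
    have hC : 7 / ((1 - ε) * (2 - ε)) * (ε ^ 4 / 4) ≤ ε ^ 4 * (1 / (1 - ε) ^ 4) := by
      rw [div_mul_eq_mul_div, div_le_iff₀ (by positivity), mul_one_div,
        div_mul_eq_mul_div, le_div_iff₀ (by positivity)]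
      -- 7 * (ε^4/4) * (1-ε)^4 ≤ ε^4 * ((1-ε)*(2-ε)) ... check form
      nlinarith [mul_le_mul_of_nonneg_left h31 (by positivity : (0:ℝ) ≤ 7 * (1 - ε)),
        mul_le_mul_of_nonneg_left (show 7 * (1 - ε) ≤ 8 - 4 * ε by linarith) h1ε.le,
        pow_nonneg hε0 4, sq_nonneg (1 - ε),
        mul_le_mul_of_nonneg_left
          (mul_le_mul_of_nonneg_left h31 (by positivity : (0:ℝ) ≤ 7 * (1 - ε)))
          (pow_nonneg hε0 4),
        mul_le_mul_of_nonneg_left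
          (mul_le_mul_of_nonneg_left (show 7 * (1 - ε) ≤ 8 - 4 * ε by linarith) h1ε.le)
          (pow_nonneg hε0 4)]
    calc (∫ t in x..(0:ℝ), -h t) ≤ 7 / ((1 - ε) * (2 - ε)) * (x ^ 4 / 4) := hmono
      _ ≤ 7 / ((1 - ε) * (2 - ε)) * (ε ^ 4 / 4) := by gcongr
      _ ≤ ε ^ 4 * (1 / (1 - ε) ^ 4) := hC
      _ ≤ ε ^ 4 * (1 / (1 - ε) ^ 4 + 1 / (2 - ε) ^ 4) := by
          apply mul_le_mul_of_nonneg_left _ (by positivity)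
          have : (0:ℝ) ≤ 1 / (2 - ε) ^ 4 := by positivity
          linarith
end

section
/- Let u_1,…,u_M be real numbers, r an index with u_r > 0 and |u_m| ≤ u_r for all m ≠ r. Define ψ_SPICE(u) = 4 sinh²(u) and ψ_AIRM(u) = 4u². If Σ_m ψ_SPICE(u_m) > 0 and Σ_m ψ_AIRM(u_m) > 0, then ψ_SPICE(u_r)/Σ_m ψ_SPICE(u_m) ≥ ψ_AIRM(u_r)/Σ_m ψ_AIRM(u_m). -/
open Real

lemma sinh_convexOn : ConvexOn ℝ (Set.Ici 0) Real.sinh := by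
  apply convexOn_of_deriv2_nonneg (convex_Ici 0)
    Real.continuous_sinh.continuousOn
    Real.differentiable_sinh.differentiableOn
  · intro x hx
    simp [Real.deriv_sinh]
    exact Real.differentiable_cosh.differentiableAt.differentiableWithinAt
  · intro x hx
    rw [interior_Ici] at hx
    show 0 ≤ deriv^[2] Real.sinh x
    have : deriv^[2] Real.sinh x = Real.sinh x := by
      simp [Function.iterate_succ, Real.deriv_sinh, Real.deriv_cosh]
    rw [this]
    exact Real.sinh_nonneg_iff.2 (Set.mem_Ioi.1 hx).le

/-- For `0 ≤ a ≤ b`: `sinh a * b ≤ sinh b * a`. -/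
lemma sinh_mul_le (a b : ℝ) (ha : 0 ≤ a) (hab : a ≤ b) :
    Real.sinh a * b ≤ Real.sinh b * a := by
  rcases eq_or_lt_of_le (ha.trans hab) with hb | hb
  · have hb0 : b = 0 := hb.symm
    have ha0 : a = 0 := le_antisymm (hb0 ▸ hab) ha
    simp [ha0, hb0]
  · have hb' : (0:ℝ) < b := hb
    have hab1 : a / b ≤ 1 := (div_le_one hb').2 hab
    have key := sinh_convexOn.2 (Set.mem_Ici.2 hb'.le)
      (Set.mem_Ici.2 (le_refl (0:ℝ)))
      (show (0:ℝ) ≤ a / b by positivity)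
      (show (0:ℝ) ≤ 1 - a / b by linarith)
      (by ring)
    simp only [smul_eq_mul] at key
    rw [Real.sinh_zero] at key
    have h1 : a / b * b + (1 - a / b) * 0 = a := by field_simp; ring
    rw [h1] at key
    have : Real.sinh a ≤ a / b * Real.sinh b := by linarith
    calc Real.sinh a * b ≤ (a / b * Real.sinh b) * b := by nlinarith
      _ = Real.sinh b * a := by field_simp

theorem spice_vs_airm_contribution (M : ℕ) (u : Fin M → ℝ) (r : Fin M)
    (hr : 0 < u r) (hb : ∀ m, m ≠ r → |u m| ≤ u r)
    (hS : 0 < ∑ m, 4 * Real.sinh (u m) ^ 2)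
    (hA : 0 < ∑ m, 4 * (u m) ^ 2) :
    4 * (u r) ^ 2 / ∑ m, 4 * (u m) ^ 2 ≤
      4 * Real.sinh (u r) ^ 2 / ∑ m, 4 * Real.sinh (u m) ^ 2 := by
  rw [div_le_div_iff₀ hA hS]
  have key : ∀ m, (u r)^2 * Real.sinh (u m) ^ 2 ≤ Real.sinh (u r) ^ 2 * (u m)^2 := by
    intro m
    rcases eq_or_ne m r with rfl | hm
    · ring_nf; exact le_rfl
    · have habs := hb m hm
      have h1 : Real.sinh |u m| * u r ≤ Real.sinh (u r) * |u m| :=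
        sinh_mul_le _ _ (abs_nonneg _) habs
      have h2 : 0 ≤ Real.sinh |u m| := Real.sinh_nonneg_iff.2 (abs_nonneg _)
      have h3 : 0 ≤ Real.sinh (u r) := Real.sinh_nonneg_iff.2 hr.le
      have hsq : (Real.sinh |u m| * u r)^2 ≤ (Real.sinh (u r) * |u m|)^2 := by
        apply sq_le_sq' _ h1
        nlinarith
      have habs_sinh : Real.sinh |u m| ^ 2 = Real.sinh (u m) ^ 2 := by
        rcases abs_cases (u m) with ⟨h, _⟩ | ⟨h, _⟩ <;> rw [h] <;> simp [Real.sinh_neg]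
      have : |u m|^2 = (u m)^2 := sq_abs _
      nlinarith [hsq]
  calc 4 * u r ^ 2 * ∑ m, 4 * Real.sinh (u m) ^ 2
      = ∑ m, 16 * ((u r)^2 * Real.sinh (u m) ^ 2) := by
        rw [Finset.mul_sum]; exact Finset.sum_congr rfl fun m _ => by ring
    _ ≤ ∑ m, 16 * (Real.sinh (u r) ^ 2 * (u m)^2) := by
        apply Finset.sum_le_sum; intro m _; nlinarith [key m]
    _ = 4 * Real.sinh (u r) ^ 2 * ∑ m, 4 * u m ^ 2 := by
        rw [Finset.mul_sum]; exact Finset.sum_congr rfl fun m _ => by ring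
end

section
/- Let u_1,…,u_M be real numbers, r an index with u_r > 0 and |u_m| ≤ u_r for all m ≠ r. Define ψ_AIRM(u) = 4u² and ψ_JBLD(u) = log(cosh u). If Σ_m ψ_AIRM(u_m) > 0 and Σ_m ψ_JBLD(u_m) > 0, then ψ_AIRM(u_r)/Σ_m ψ_AIRM(u_m) ≥ ψ_JBLD(u_r)/Σ_m ψ_JBLD(u_m). -/
open Real

private lemma aux_self_le_sinh_cosh (x : ℝ) (hx : 0 ≤ x) :
    x ≤ Real.sinh x * Real.cosh x := by
  have h2 : (2 : ℝ) * x ≤ Real.sinh (2 * x) :=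
    Real.self_le_sinh_iff.mpr (by linarith)
  have := Real.sinh_two_mul x
  nlinarith

private lemma aux_hasDerivAt_f (y : ℝ) :
    HasDerivAt (fun x => 2 * Real.log (Real.cosh x) - x * (Real.sinh x / Real.cosh x))
      (Real.sinh y / Real.cosh y - y / Real.cosh y ^ 2) y := by
  have hc := Real.cosh_pos y
  have h1 : HasDerivAt (fun x => Real.log (Real.cosh x)) (Real.sinh y / Real.cosh y) y :=
    (Real.hasDerivAt_cosh y).log hc.ne'
  have htanh : HasDerivAt (fun x => Real.sinh x / Real.cosh x)
      ((Real.cosh y * Real.cosh y - Real.sinh y * Real.sinh y) / Real.cosh y ^ 2) y :=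
    (Real.hasDerivAt_sinh y).div (Real.hasDerivAt_cosh y) hc.ne'
  have htanh' : HasDerivAt (fun x => Real.sinh x / Real.cosh x) (1 / Real.cosh y ^ 2) y := by
    convert htanh using 1
    have := Real.cosh_sq_sub_sinh_sq y
    field_simp
    nlinarith
  have h2 : HasDerivAt (fun x => x * (Real.sinh x / Real.cosh x))
      (1 * (Real.sinh y / Real.cosh y) + y * (1 / Real.cosh y ^ 2)) y :=
    (hasDerivAt_id y).mul htanh'
  have := (h1.const_mul 2).sub h2
  exact this.congr_deriv (by ring)

private lemma aux_x_tanh_le (x : ℝ) (hx : 0 ≤ x) :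
    x * (Real.sinh x / Real.cosh x) ≤ 2 * Real.log (Real.cosh x) := by
  set f : ℝ → ℝ := fun x => 2 * Real.log (Real.cosh x) - x * (Real.sinh x / Real.cosh x) with hf
  have mono : MonotoneOn f (Set.Ici 0) := by
    apply monotoneOn_of_deriv_nonneg (convex_Ici 0)
    · exact fun y _ => ((aux_hasDerivAt_f y).differentiableAt.continuousAt).continuousWithinAt
    · intro y hy
      exact (aux_hasDerivAt_f y).differentiableAt.differentiableWithinAt
    · intro y hy
      rw [interior_Ici] at hy
      rw [(aux_hasDerivAt_f y).deriv]
      have hc := Real.cosh_pos y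
      have h1 := aux_self_le_sinh_cosh y (le_of_lt hy)
      rw [div_sub_div _ _ hc.ne' (by positivity : (Real.cosh y ^ 2) ≠ 0)]
      apply div_nonneg _ (by positivity)
      nlinarith
  have h0 : f 0 ≤ f x := mono (by simp) hx hx
  have : f 0 = 0 := by simp [hf]
  rw [this] at h0
  simp only [hf] at h0
  linarith

private lemma aux_key (a b : ℝ) (ha : 0 < a) (hab : a ≤ b) :
    Real.log (Real.cosh b) * a ^ 2 ≤ Real.log (Real.cosh a) * b ^ 2 := by
  set g : ℝ → ℝ := fun x => Real.log (Real.cosh x) / x ^ 2 with hg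
  have hd : ∀ y : ℝ, y ≠ 0 → HasDerivAt g
      ((Real.sinh y / Real.cosh y * y ^ 2 - Real.log (Real.cosh y) * (2 * y)) / (y ^ 2) ^ 2) y := by
    intro y hy
    have h1 : HasDerivAt (fun x => Real.log (Real.cosh x)) (Real.sinh y / Real.cosh y) y :=
      (Real.hasDerivAt_cosh y).log (Real.cosh_pos y).ne'
    have h2 : HasDerivAt (fun x : ℝ => x ^ 2) ((2 : ℕ) * y ^ 1) y := hasDerivAt_pow 2 y
    have := h1.div h2 (pow_ne_zero 2 hy)
    exact this.congr_deriv (by push_cast; ring)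
  have anti : AntitoneOn g (Set.Ici a) := by
    apply antitoneOn_of_deriv_nonpos (convex_Ici a)
    · intro y hy
      have hy0 : y ≠ 0 := by
        have : a ≤ y := hy
        exact (lt_of_lt_of_le ha this).ne'
      exact ((hd y hy0).differentiableAt.continuousAt).continuousWithinAt
    · intro y hy
      rw [interior_Ici] at hy
      have hy0 : y ≠ 0 := (lt_trans ha hy).ne'
      exact (hd y hy0).differentiableAt.differentiableWithinAt
    · intro y hy
      rw [interior_Ici] at hy
      have hy0 : 0 < y := lt_trans ha hy
      rw [(hd y hy0.ne').deriv]
      apply div_nonpos_of_nonpos_of_nonneg _ (by positivity)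
      have := aux_x_tanh_le y hy0.le
      have hc := Real.cosh_pos y
      nlinarith
  have hgba : g b ≤ g a := anti (le_refl a : a ∈ Set.Ici a) (le_trans (le_refl a) hab : b ∈ Set.Ici a) hab
  have hb : 0 < b := lt_of_lt_of_le ha hab
  rw [hg] at hgba
  simp only at hgba
  rw [div_le_div_iff₀ (by positivity) (by positivity)] at hgba
  exact hgba

private lemma aux_pointwise (x b : ℝ) (hb : 0 < b) (hx : |x| ≤ b) :
    Real.log (Real.cosh b) * x ^ 2 ≤ Real.log (Real.cosh x) * b ^ 2 := by
  rcases eq_or_ne x 0 with h | h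
  · simp [h]
  · have ha : 0 < |x| := abs_pos.mpr h
    have := aux_key |x| b ha hx
    rwa [Real.cosh_abs, sq_abs] at this

theorem airm_vs_jbld_contribution (M : ℕ) (u : Fin M → ℝ) (r : Fin M)
    (hr : 0 < u r) (hb : ∀ m, m ≠ r → |u m| ≤ u r)
    (hA : 0 < ∑ m, 4 * (u m) ^ 2)
    (hJ : 0 < ∑ m, Real.log (Real.cosh (u m))) :
    Real.log (Real.cosh (u r)) / ∑ m, Real.log (Real.cosh (u m)) ≤
      4 * (u r) ^ 2 / ∑ m, 4 * (u m) ^ 2 := by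
  rw [div_le_div_iff₀ hJ hA]
  have key : ∀ m : Fin M, Real.log (Real.cosh (u r)) * (4 * (u m) ^ 2) ≤
      4 * (u r) ^ 2 * Real.log (Real.cosh (u m)) := by
    intro m
    have habs : |u m| ≤ u r := by
      rcases eq_or_ne m r with h | h
      · rw [h]; exact le_of_eq (abs_of_pos hr)
      · exact hb m h
    have := aux_pointwise (u m) (u r) hr habs
    nlinarith
  calc Real.log (Real.cosh (u r)) * ∑ m, 4 * (u m) ^ 2
      = ∑ m, Real.log (Real.cosh (u r)) * (4 * (u m) ^ 2) := by rw [Finset.mul_sum]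
    _ ≤ ∑ m, 4 * (u r) ^ 2 * Real.log (Real.cosh (u m)) :=
        Finset.sum_le_sum fun m _ => key m
    _ = 4 * (u r) ^ 2 * ∑ m, Real.log (Real.cosh (u m)) := by rw [Finset.mul_sum]
end
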